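/- Let σ be an m×n matrix, μ ∈ ℝ^m, with GOP solution (π*, λ*) of σσᵀπ* + λ*1 = μ, 1ᵀπ* = 1, and θ = σᵀπ*. Extend the market by a security with drift α ∈ ℝ and volatility vector β ∈ ℝ^n. If β = σᵀx* for some x* with 1ᵀx* = 1 and a GOP exists for the extended market, then necessarily α = λ* + βᵀθ, and the extended GOP weights are (π*, 0) (no position in the new security changes the GOP). -/

import Mathlib

/-!
The new security is replicated by the fully invested portfolio `x*`, since `β = σᵀx*`. Pairing any
first-order condition `σ w + l·1 = μ` of the original securities with `x*` gives
`βᵀw + l = x*ᵀμ`: whatever the portfolio, the new security earns the replicating return. For the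
extended GOP this forces `α = x*ᵀμ`, and for `(π*, λ*)` it gives `λ* + βᵀθ = x*ᵀμ`; hence the two
agree, and `(π*, 0)` with `λ*` solves the extended first-order conditions.
-/
open Matrix

section
variable {R ι κ : Type*} [CommRing R] [Fintype ι] [Fintype κ]

theorem dotProduct_add_eq_of_eq_transpose_mulVec {σ : Matrix ι κ R} {β w : κ → R}
    {x μ : ι → R} {l : R} (hβ : β = σᵀ *ᵥ x) (hx : x ⬝ᵥ (fun _ => 1) = 1)
    (h : σ *ᵥ w + l • (fun _ => 1) = μ) : β ⬝ᵥ w + l = x ⬝ᵥ μ := by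
  rw [hβ, ← h, dotProduct_add, dotProduct_smul, hx, smul_eq_mul, mul_one, dotProduct_mulVec,
    mulVec_transpose]

theorem fromRows_replicateRow_mul_transpose_mulVec_add_smul_eq_iff (σ : Matrix ι κ R)
    (β : κ → R) (π : ι ⊕ Unit → R) (l a : R) (μ : ι → R) :
    (fromRows σ (replicateRow Unit β) * (fromRows σ (replicateRow Unit β))ᵀ) *ᵥ π
        + l • (fun _ => 1) = Sum.elim μ (fun _ => a) ↔
      σ *ᵥ ((fromRows σ (replicateRow Unit β))ᵀ *ᵥ π) + l • (fun _ => 1) = μ ∧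
        β ⬝ᵥ ((fromRows σ (replicateRow Unit β))ᵀ *ᵥ π) + l = a := by
  have hsplit : (l • fun _ => 1 : ι ⊕ Unit → R) = Sum.elim (l • fun _ => 1) (fun _ => l) := by
    ext (_ | _) <;> simp
  rw [← mulVec_mulVec, fromRows_mulVec, replicateRow_mulVec_eq_const, hsplit, ← Sum.elim_add_add,
    Sum.elim_eq_iff]
  exact and_congr Iff.rfl ⟨fun h => congrFun h (), fun h => funext fun _ => h⟩

omit [Fintype κ] in
theorem transpose_fromRows_mulVec_sumElim_zero {ο : Type*} [Fintype ο] (σ : Matrix ι κ R)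
    (B : Matrix ο κ R) (p : ι → R) : (fromRows σ B)ᵀ *ᵥ Sum.elim p 0 = σᵀ *ᵥ p := by
  rw [transpose_fromRows, fromCols_mulVec_sumElim, mulVec_zero, add_zero]
end

theorem market_extension_replicable (m n : ℕ) (σ : Matrix (Fin m) (Fin n) ℝ)
    (μ πs xs : Fin m → ℝ) (lams α : ℝ) (β : Fin n → ℝ)
    (σ' : Matrix (Fin m ⊕ Unit) (Fin n) ℝ)
    (hσ' : σ' = Matrix.fromRows σ (Matrix.of fun _ j => β j))
    (h1 : (σ * σᵀ).mulVec πs + lams • (fun _ => (1 : ℝ)) = μ)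
    (h2 : πs ⬝ᵥ (fun _ => (1 : ℝ)) = 1)
    (hβ : β = σᵀ.mulVec xs)
    (hx : xs ⬝ᵥ (fun _ => (1 : ℝ)) = 1)
    (hGOPext : ∃ (π' : Fin m ⊕ Unit → ℝ) (l : ℝ),
      (σ' * σ'ᵀ).mulVec π' + l • (fun _ => (1 : ℝ)) = Sum.elim μ (fun _ => α) ∧
      π' ⬝ᵥ (fun _ => (1 : ℝ)) = 1) :
    α = lams + β ⬝ᵥ (σᵀ.mulVec πs) ∧
    ((σ' * σ'ᵀ).mulVec (Sum.elim πs (fun _ => 0)) + lams • (fun _ => (1 : ℝ)) =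
        Sum.elim μ (fun _ => α) ∧
      (Sum.elim πs (fun _ => (0 : ℝ))) ⬝ᵥ (fun _ : Fin m ⊕ Unit => (1 : ℝ)) = 1) := by
  obtain ⟨π', l, hext, -⟩ := hGOPext
  subst hσ'
  have hfoc := fromRows_replicateRow_mul_transpose_mulVec_add_smul_eq_iff σ β
  obtain ⟨hμ, hα⟩ := (hfoc π' l α μ).1 hext
  rw [← mulVec_mulVec] at h1
  have hα_price : α = xs ⬝ᵥ μ := hα ▸ dotProduct_add_eq_of_eq_transpose_mulVec hβ hx hμ
  have hlams : β ⬝ᵥ (σᵀ *ᵥ πs) + lams = xs ⬝ᵥ μ :=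
    dotProduct_add_eq_of_eq_transpose_mulVec hβ hx h1
  refine ⟨by linarith, (hfoc _ lams α μ).2 ?_, ?_⟩
  · rw [← Pi.zero_def, transpose_fromRows_mulVec_sumElim_zero]
    exact ⟨h1, by linarith⟩
  · simpa [dotProduct, Fintype.sum_sum_type] using h2
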